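/- arXiv:1403.5124 — 2 statements merged into one kernel-verified Lean document; each statement's English description precedes it below -/
import Mathlib

section
/- The nine elements a, a', b, c, c', d, d', e, f of F are algebraically independent over ℚ; consequently the subring ℤ[a, a', b, c, c', d, d', e, f] of F is isomorphic to a polynomial ring over ℤ in nine indeterminates. -/
noncomputable section

/-- The field `F = Frac(ℤ[x₀,…,x₈])`. -/
abbrev F : Type := FractionRing (MvPolynomial (Fin 9) ℤ)

/-- The images of the indeterminates `x₀,…,x₈` in `F`. -/
def x (i : Fin 9) : F := algebraMap (MvPolynomial (Fin 9) ℤ) F (MvPolynomial.X i)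

def a : F := x 0
def a' : F := x 4
def b : F := x 5
def c : F := (x 1 + x 0 * x 2 + x 7) / (x 0 * x 1)
def c' : F := (x 3 + x 2 * x 4 + x 8) / (x 3 * x 4)
def f : F := (x 2 + x 1 * x 3 * x 5 + x 6) / (x 2 * x 5)
def d : F :=
  ((x 1) ^ 2 * x 3 * x 5 + (x 2 + x 6) * (x 0 * x 2 + x 7)
      + x 1 * (x 2 + x 6 + x 3 * x 5 * x 7)) / (x 0 * x 1 * x 2 * x 5)
def d' : F :=
  ((x 2) ^ 2 * x 4 + (x 1 * x 3 * x 5 + x 6) * (x 3 + x 8)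
      + x 2 * (x 3 + x 4 * x 6 + x 8)) / (x 2 * x 3 * x 4 * x 5)
def e : F :=
  ((x 1) ^ 2 * x 3 * x 5 * (x 3 + x 8)
      + (x 2 + x 6) * (x 0 * x 2 + x 7) * (x 3 + x 2 * x 4 + x 8)
      + x 1 * ((x 2) ^ 2 * x 4 + (x 6 + x 3 * x 5 * x 7) * (x 3 + x 8)
          + x 2 * (x 3 + x 4 * x 6 + x 8))) / (x 0 * x 1 * x 2 * x 3 * x 4 * x 5)

/-!
Each initial variable `xᵢ` is a polynomial over `ℤ` in the nine cluster variables: `a, a', b` are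
`x₀, x₄, x₅`, the mutable `x₁, x₂, x₃` are explicit polynomials in `c, c', d, d', e, f`, and the
frozen `x₆, x₇, x₈` are obtained by solving the exchange relations defining `f, c, c'`. Hence `F` is
algebraic over `ℤ[a, …, f]`. As `F` is the fraction field of `ℤ[x₀, …, x₈]`, its transcendence
degree over `ℤ` is `9`, so nine elements over which `F` is algebraic form a transcendence basis.
Independence over `ℤ` passes to `ℚ` because `ℚ` is algebraic over `ℤ`, and an algebraically
independent family generates a polynomial ring.
-/

open Algebra MvPolynomial Set

theorem IsTranscendenceBasis.of_forall_mem_adjoin {ι R A : Type*} [Finite ι] [CommRing R]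
    [Nontrivial R] [CommRing A] [NoZeroDivisors A] [Algebra R A] [FaithfulSMul R A]
    {y z : ι → A} (hy : IsTranscendenceBasis R y) (hyz : ∀ i, y i ∈ adjoin R (range z)) :
    IsTranscendenceBasis R z := by
  have hle : adjoin R (range y) ≤ adjoin R (range z) := adjoin_le (range_subset_iff.mpr hyz)
  have := hy.isAlgebraic
  let _ : Algebra (adjoin R (range y)) (adjoin R (range z)) :=
    (Subalgebra.inclusion hle).toRingHom.toAlgebra
  have : IsScalarTower (adjoin R (range y)) (adjoin R (range z)) A :=
    .of_algebraMap_eq fun _ ↦ rfl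
  have : Algebra.IsAlgebraic (adjoin R (range z)) A :=
    .extendScalars (Subalgebra.inclusion_injective hle)
  exact Algebra.IsAlgebraic.isTranscendenceBasis_of_lift_le_trdeg_of_finite R z
    hy.lift_cardinalMk_eq_trdeg.le

theorem isTranscendenceBasis_x : IsTranscendenceBasis ℤ x :=
  have := IsLocalization.isAlgebraic F (nonZeroDivisors (MvPolynomial (Fin 9) ℤ))
  (IsTranscendenceBasis.mvPolynomial (Fin 9) ℤ).algebraMap_comp

theorem x_ne_zero (i : Fin 9) : x i ≠ 0 :=
  (map_ne_zero_iff _ (IsFractionRing.injective _ F)).mpr (X_ne_zero i)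

theorem x_one_eq : x 1 = c' * f - d' := by
  simp only [c', f, d']
  field_simp [x_ne_zero]
  ring

theorem x_three_eq : x 3 = c * f - d := by
  simp only [c, f, d]
  field_simp [x_ne_zero]
  ring

theorem x_two_eq : x 2 = e + c * c' * f - c * d' - c' * d := by
  simp only [c, c', f, d, d', e]
  field_simp [x_ne_zero]
  ring

theorem x_six_eq : x 6 = (f * b - 1) * x 2 - x 1 * x 3 * b := by
  simp only [f, b]
  field_simp [x_ne_zero]
  ring

theorem x_seven_eq : x 7 = (c * a - 1) * x 1 - a * x 2 := by
  simp only [c, a]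
  field_simp [x_ne_zero]
  ring

theorem x_eight_eq : x 8 = (c' * a' - 1) * x 3 - a' * x 2 := by
  simp only [c', a']
  field_simp [x_ne_zero]
  ring

theorem x_mem_adjoin (i : Fin 9) : x i ∈ adjoin ℤ (range ![a, a', b, c, c', d, d', e, f]) := by
  set S := adjoin ℤ (range ![a, a', b, c, c', d, d', e, f])
  have mem (j : Fin 9) : ![a, a', b, c, c', d, d', e, f] j ∈ S := subset_adjoin (mem_range_self j)
  have ha : a ∈ S := mem 0
  have ha' : a' ∈ S := mem 1
  have hb : b ∈ S := mem 2
  have hc : c ∈ S := mem 3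
  have hc' : c' ∈ S := mem 4
  have hd : d ∈ S := mem 5
  have hd' : d' ∈ S := mem 6
  have he : e ∈ S := mem 7
  have hf : f ∈ S := mem 8
  have h1 : x 1 ∈ S := x_one_eq ▸ sub_mem (mul_mem hc' hf) hd'
  have h3 : x 3 ∈ S := x_three_eq ▸ sub_mem (mul_mem hc hf) hd
  have h2 : x 2 ∈ S := x_two_eq ▸
    sub_mem (sub_mem (add_mem he (mul_mem (mul_mem hc hc') hf)) (mul_mem hc hd')) (mul_mem hc' hd)
  fin_cases i
  · exact ha
  · exact h1
  · exact h2
  · exact h3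
  · exact ha'
  · exact hb
  · exact x_six_eq ▸ sub_mem (mul_mem (sub_mem (mul_mem hf hb) (one_mem S)) h2)
      (mul_mem (mul_mem h1 h3) hb)
  · exact x_seven_eq ▸ sub_mem (mul_mem (sub_mem (mul_mem hc ha) (one_mem S)) h1) (mul_mem ha h2)
  · exact x_eight_eq ▸ sub_mem (mul_mem (sub_mem (mul_mem hc' ha') (one_mem S)) h3)
      (mul_mem ha' h2)

/-- The nine generators are algebraically independent over ℚ, and consequently
`ℤ[a, a', b, c, c', d, d', e, f]` is isomorphic to a polynomial ring over ℤ in nine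
indeterminates. -/
theorem stmt0 :
    AlgebraicIndependent ℚ (![a, a', b, c, c', d, d', e, f] : Fin 9 → F) ∧
    Nonempty
      ((Algebra.adjoin ℤ (Set.range (![a, a', b, c, c', d, d', e, f] : Fin 9 → F))) ≃+*
        MvPolynomial (Fin 9) ℤ) := by
  have hv : IsTranscendenceBasis ℤ ![a, a', b, c, c', d, d', e, f] :=
    isTranscendenceBasis_x.of_forall_mem_adjoin x_mem_adjoin
  -- `F` gets its `ℤ`-algebra structure from the localization, which is not reducibly `zsmul`.
  have : @IsScalarTower ℤ ℚ F Algebra.toSMul Algebra.toSMul Algebra.toSMul :=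
    .of_algebraMap_eq' (RingHom.ext_int _ _)
  have := IsLocalization.isAlgebraic ℚ (nonZeroDivisors ℤ)
  exact ⟨hv.1.extendScalars ℚ, ⟨hv.1.aevalEquiv.symm.toRingEquiv⟩⟩
end
end

section
/- Let α ∈ Φ₊ be a positive root of type E₆, with coordinates α = Σᵢ aᵢαᵢ, such that α is not a simple root and α ∉ {α₀+α₁, α₃+α₄, α₂+α₅}. Put u = α₀+α₁+α₂+α₃+α₄+α₅ = (1,1,1,1,1,1), v = α₀+α₁+α₂+α₅ = (1,1,1,0,0,1), w = α₂+α₃+α₄+α₅ = (0,0,1,1,1,1). Then at least one of the following holds, and in each applicable case the stated expression is valid with the indicated coefficients all nonnegative integers: (i) a₁ = a₂ ≥ a₃, and α = a₃·u + (a₁−a₃)·v + (a₁−a₀)·(−α₀) + (a₃−a₄)·(−α₄) + (a₁−a₅)·(−α₅) with a₀ ≤ a₁, a₄ ≤ a₃ and a₅ ≤ a₁; (ii) a₁ ≤ a₂ = a₃, and α = a₁·u + (a₃−a₁)·w + (a₁−a₀)·(−α₀) + (a₃−a₄)·(−α₄) + (a₃−a₅)·(−α₅) with a₀ ≤ a₁,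 a₄ ≤ a₃ and a₅ ≤ a₃; (iii) a₁ = a₃ < a₂, and then ⌊a₂/2⌋ = a₂ − a₁, a₁ ≥ ⌊a₂/2⌋, and α = ⌊a₂/2⌋·v + ⌊a₂/2⌋·w + (a₁−⌊a₂/2⌋)·u + b₀·(−α₀) + b₄·(−α₄) + b₅·(−α₅) for some nonnegative integers b₀, b₄, b₅. -/
/-!
A root is a solution of `q(x) = 1` for the positive definite quadratic form of E₆, so its
coordinates are bounded in absolute value by those of the highest root `(1,2,3,2,1,2)`. The
positive roots are therefore the 36 roots in that box, found by a finite search, and every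
coordinate inequality the decompositions need is read off this table. Given those inequalities,
each of the three expansions of `α` is an identity checked coordinatewise.
-/

open Finset

/-- The Cartan matrix of type E₆ with vertices labelled `0,1,2,3,4,5` and edges
`{0,1}, {1,2}, {2,3}, {3,4}, {2,5}` (vertex 5 attached to the trivalent node 2). -/
def cartanE6 (i j : Fin 6) : ℤ :=
  if i = j then 2
  else if (i.val, j.val) ∈
      [(0,1),(1,0),(1,2),(2,1),(2,3),(3,2),(3,4),(4,3),(2,5),(5,2)] then -1
  else 0

/-- The bilinear form `B(u,v) = uᵀ A v` on the root lattice `ℤ⁶`. -/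
def bformE6 (u v : Fin 6 → ℤ) : ℤ := ∑ i, ∑ j, u i * cartanE6 i j * v j

/-- The simple root `αᵢ`, the `i`-th standard basis vector of `ℤ⁶`. -/
def simpleRoot (i : Fin 6) : Fin 6 → ℤ := fun j => if j = i then 1 else 0

/-- A root of type E₆: a lattice vector of squared length 2. -/
def IsRoot (v : Fin 6 → ℤ) : Prop := bformE6 v v = 2

/-- A positive root: a root with all coordinates nonnegative. -/
def IsPositiveRoot (v : Fin 6 → ℤ) : Prop := IsRoot v ∧ ∀ i, 0 ≤ v i

/-- An almost positive root: a positive root or the negative of a simple root. -/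
def IsAlmostPositive (v : Fin 6 → ℤ) : Prop :=
  IsPositiveRoot v ∨ ∃ i, v = -simpleRoot i

/-- The sign `ε(i)`: `+1` on `Ĩ₀ = {1,3,5}` and `−1` on `{0,2,4}`. -/
def epsE6 (i : Fin 6) : ℤ := if i = 1 ∨ i = 3 ∨ i = 5 then 1 else -1

/-- The piecewise-linear involution `τ_ε` (`s = 1` gives `τ₊`, `s = -1` gives `τ₋`). -/
def tauE6 (s : ℤ) (v : Fin 6 → ℤ) : Fin 6 → ℤ := fun i =>
  if epsE6 i = s then -v i - ∑ j ∈ Finset.univ.erase i, cartanE6 i j * max (v j) 0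
  else v i

/-- The pairing `{ξ, γ} = Σᵢ ε(i)·ξᵢ·γᵢ`. -/
def pairE6 (ξ γ : Fin 6 → ℤ) : ℤ := ∑ i, epsE6 i * ξ i * γ i

/-- The compatibility degree `(α ∥ β) = max({α, τ₊β}, {τ₊α, β}, 0)`. -/
def compatDeg (α β : Fin 6 → ℤ) : ℤ :=
  max (max (pairE6 α (tauE6 1 β)) (pairE6 (tauE6 1 α) β)) 0

/-- `C<sub>α</sub>`: the set of almost positive roots compatible with `α`. -/
def compatSet (α : Fin 6 → ℤ) : Set (Fin 6 → ℤ) :=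
  {β | IsAlmostPositive β ∧ compatDeg α β = 0}

/-- The highest root-lattice vectors used in the decomposition. -/
def uE6 : Fin 6 → ℤ :=
  simpleRoot 0 + simpleRoot 1 + simpleRoot 2 + simpleRoot 3 + simpleRoot 4 + simpleRoot 5

def vE6 : Fin 6 → ℤ := simpleRoot 0 + simpleRoot 1 + simpleRoot 2 + simpleRoot 5

def wE6 : Fin 6 → ℤ := simpleRoot 2 + simpleRoot 3 + simpleRoot 4 + simpleRoot 5

theorem bformE6_self (v : Fin 6 → ℤ) :
    bformE6 v v = 2 * (v 0 ^ 2 + v 1 ^ 2 + v 2 ^ 2 + v 3 ^ 2 + v 4 ^ 2 + v 5 ^ 2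
      - v 0 * v 1 - v 1 * v 2 - v 2 * v 3 - v 3 * v 4 - v 2 * v 5) := by
  simp +decide only [bformE6, Fin.sum_univ_six, cartanE6, ↓reduceIte]
  ring

def highestRootE6 : Fin 6 → ℤ := ![1, 2, 3, 2, 1, 2]

/- A root satisfies `v i ^ 2 ≤ 2 (A⁻¹)ᵢᵢ`; each certificate completes the squares of the form
in an order that eliminates `v i` last. -/
theorem IsRoot.abs_le_highestRootE6 {v : Fin 6 → ℤ} (hv : IsRoot v) (i : Fin 6) :
    |v i| ≤ highestRootE6 i := by
  have hq := bformE6_self v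
  rw [hv] at hq
  have hsq : v i ^ 2 < (highestRootE6 i + 1) ^ 2 := by
    fin_cases i
    · show v 0 ^ 2 < 4
      nlinarith [sq_nonneg (5 * v 0 - 4 * v 1), sq_nonneg (6 * v 1 - 5 * v 2),
          sq_nonneg (7 * v 2 - 6 * v 3 - 6 * v 5), sq_nonneg (8 * v 3 - 7 * v 4 - 6 * v 5),
          sq_nonneg (3 * v 4 - 2 * v 5)]
    · show v 1 ^ 2 < 9
      nlinarith [sq_nonneg (2 * v 0 - v 1), sq_nonneg (6 * v 1 - 5 * v 2),
          sq_nonneg (7 * v 2 - 6 * v 3 - 6 * v 5), sq_nonneg (8 * v 3 - 7 * v 4 - 6 * v 5),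
          sq_nonneg (3 * v 4 - 2 * v 5)]
    · show v 2 ^ 2 < 16
      nlinarith [sq_nonneg (2 * v 0 - v 1), sq_nonneg (3 * v 1 - 2 * v 2),
          sq_nonneg (7 * v 2 - 6 * v 3 - 6 * v 5), sq_nonneg (8 * v 3 - 7 * v 4 - 6 * v 5),
          sq_nonneg (3 * v 4 - 2 * v 5)]
    · show v 3 ^ 2 < 9
      nlinarith [sq_nonneg (2 * v 0 - v 1), sq_nonneg (3 * v 1 - 2 * v 2),
          sq_nonneg (4 * v 2 - 3 * v 3 - 3 * v 5), sq_nonneg (19 * v 3 - 20 * v 4 - 15 * v 5),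
          sq_nonneg (6 * v 4 - 5 * v 5)]
    · show v 4 ^ 2 < 4
      nlinarith [sq_nonneg (2 * v 0 - v 1), sq_nonneg (3 * v 1 - 2 * v 2),
          sq_nonneg (4 * v 2 - 3 * v 3 - 3 * v 5), sq_nonneg (5 * v 3 - 4 * v 4 - 3 * v 5),
          sq_nonneg (3 * v 4 - 4 * v 5)]
    · show v 5 ^ 2 < 9
      nlinarith [sq_nonneg (2 * v 0 - v 1), sq_nonneg (3 * v 1 - 2 * v 2),
          sq_nonneg (4 * v 2 - 3 * v 3 - 3 * v 5), sq_nonneg (5 * v 3 - 4 * v 4 - 3 * v 5),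
          sq_nonneg (2 * v 4 - v 5)]
  exact Int.lt_add_one_iff.mp (abs_lt_of_sq_lt_sq hsq (by fin_cases i <;> decide))

def positiveRootsE6 : List (Fin 6 → ℤ) :=
  [![0,0,0,0,0,1], ![0,0,0,0,1,0], ![0,0,0,1,0,0], ![0,0,0,1,1,0], ![0,0,1,0,0,0],
   ![0,0,1,0,0,1], ![0,0,1,1,0,0], ![0,0,1,1,0,1], ![0,0,1,1,1,0], ![0,0,1,1,1,1],
   ![0,1,0,0,0,0], ![0,1,1,0,0,0], ![0,1,1,0,0,1], ![0,1,1,1,0,0], ![0,1,1,1,0,1],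
   ![0,1,1,1,1,0], ![0,1,1,1,1,1], ![0,1,2,1,0,1], ![0,1,2,1,1,1], ![0,1,2,2,1,1],
   ![1,0,0,0,0,0], ![1,1,0,0,0,0], ![1,1,1,0,0,0], ![1,1,1,0,0,1], ![1,1,1,1,0,0],
   ![1,1,1,1,0,1], ![1,1,1,1,1,0], ![1,1,1,1,1,1], ![1,1,2,1,0,1], ![1,1,2,1,1,1],
   ![1,1,2,2,1,1], ![1,2,2,1,0,1], ![1,2,2,1,1,1], ![1,2,2,2,1,1], ![1,2,3,2,1,1],
   ![1,2,3,2,1,2]]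

theorem mem_positiveRootsE6_of_bformE6_eq_two :
    ∀ v ∈ Fintype.piFinset (fun i => Finset.Icc 0 (highestRootE6 i)),
      bformE6 v v = 2 → v ∈ positiveRootsE6 := by
  decide +kernel

theorem IsPositiveRoot.mem_positiveRootsE6 {v : Fin 6 → ℤ} (hv : IsPositiveRoot v) :
    v ∈ positiveRootsE6 := by
  refine mem_positiveRootsE6_of_bformE6_eq_two v ?_ hv.1
  refine Fintype.mem_piFinset.mpr fun i => Finset.mem_Icc.mpr ⟨hv.2 i, ?_⟩
  exact (le_abs_self _).trans (hv.1.abs_le_highestRootE6 i)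

theorem apply_zero_le_apply_one_of_mem_positiveRootsE6 :
    ∀ v ∈ positiveRootsE6, v ≠ simpleRoot 0 → v 0 ≤ v 1 := by
  decide +kernel

theorem apply_four_le_apply_three_of_mem_positiveRootsE6 :
    ∀ v ∈ positiveRootsE6, v ≠ simpleRoot 4 → v 4 ≤ v 3 := by
  decide +kernel

theorem apply_five_le_apply_two_of_mem_positiveRootsE6 :
    ∀ v ∈ positiveRootsE6, v ≠ simpleRoot 5 → v 5 ≤ v 2 := by
  decide +kernel

set_option synthInstance.maxSize 1000 in
theorem apply_one_two_three_trichotomy_of_mem_positiveRootsE6 :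
    ∀ v ∈ positiveRootsE6, v ≠ simpleRoot 1 → v ≠ simpleRoot 3 →
      v ≠ simpleRoot 0 + simpleRoot 1 → v ≠ simpleRoot 3 + simpleRoot 4 →
      (v 1 = v 2 ∧ v 3 ≤ v 2) ∨ (v 1 ≤ v 2 ∧ v 2 = v 3) ∨ (v 1 = v 3 ∧ v 1 < v 2) := by
  decide +kernel

theorem apply_two_bounds_of_mem_positiveRootsE6 :
    ∀ v ∈ positiveRootsE6, v ≠ simpleRoot 2 → v ≠ simpleRoot 2 + simpleRoot 5 →
      v 1 = v 3 → v 1 < v 2 → v 2 ≤ 2 * v 1 ∧ 2 * v 1 ≤ v 2 + 1 := by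
  decide +kernel

section Decompositions

variable (α : Fin 6 → ℤ)

theorem eq_uE6_vE6_combination (h12 : α 1 = α 2) :
    α = α 3 • uE6 + (α 1 - α 3) • vE6 + (α 1 - α 0) • (-simpleRoot 0)
      + (α 3 - α 4) • (-simpleRoot 4) + (α 1 - α 5) • (-simpleRoot 5) := by
  funext i
  fin_cases i <;> simp [uE6, vE6, simpleRoot, h12]

theorem eq_uE6_wE6_combination (h23 : α 2 = α 3) :
    α = α 1 • uE6 + (α 3 - α 1) • wE6 + (α 1 - α 0) • (-simpleRoot 0)
      + (α 3 - α 4) • (-simpleRoot 4) + (α 3 - α 5) • (-simpleRoot 5) := by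
  funext i
  fin_cases i <;> simp [uE6, wE6, simpleRoot, h23]

theorem eq_vE6_wE6_uE6_combination (h13 : α 1 = α 3) {m : ℤ} (hm : m = α 2 - α 1) :
    α = m • vE6 + m • wE6 + (α 1 - m) • uE6 + (α 1 - α 0) • (-simpleRoot 0)
      + (α 1 - α 4) • (-simpleRoot 4) + (α 2 - α 5) • (-simpleRoot 5) := by
  funext i
  fin_cases i <;> simp [uE6, vE6, wE6, simpleRoot] <;> omega

end Decompositions

theorem floor_intCast_div_two_eq {K : Type*} [Field K] [LinearOrder K] [IsStrictOrderedRing K]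
    [FloorRing K] {a c : ℤ} (h₁ : 2 * c ≤ a) (h₂ : a ≤ 2 * c + 1) : ⌊(a : K) / 2⌋ = c := by
  rw [Int.floor_eq_iff, le_div_iff₀ two_pos, div_lt_iff₀ two_pos]
  exact ⟨by exact_mod_cast (by omega : c * 2 ≤ a), by exact_mod_cast (by omega : a < (c + 1) * 2)⟩

theorem stmt16 (α : Fin 6 → ℤ) (hpos : IsPositiveRoot α)
    (hns : ∀ i, α ≠ simpleRoot i)
    (h01 : α ≠ simpleRoot 0 + simpleRoot 1)
    (h34 : α ≠ simpleRoot 3 + simpleRoot 4)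
    (h25 : α ≠ simpleRoot 2 + simpleRoot 5) :
    ((α 1 = α 2 ∧ α 3 ≤ α 2) ∨ (α 1 ≤ α 2 ∧ α 2 = α 3) ∨ (α 1 = α 3 ∧ α 1 < α 2)) ∧
    ((α 1 = α 2 ∧ α 3 ≤ α 2) →
      α 0 ≤ α 1 ∧ α 4 ≤ α 3 ∧ α 5 ≤ α 1 ∧
      α = α 3 • uE6 + (α 1 - α 3) • vE6 + (α 1 - α 0) • (-simpleRoot 0)
          + (α 3 - α 4) • (-simpleRoot 4) + (α 1 - α 5) • (-simpleRoot 5)) ∧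
    ((α 1 ≤ α 2 ∧ α 2 = α 3) →
      α 0 ≤ α 1 ∧ α 4 ≤ α 3 ∧ α 5 ≤ α 3 ∧
      α = α 1 • uE6 + (α 3 - α 1) • wE6 + (α 1 - α 0) • (-simpleRoot 0)
          + (α 3 - α 4) • (-simpleRoot 4) + (α 3 - α 5) • (-simpleRoot 5)) ∧
    ((α 1 = α 3 ∧ α 1 < α 2) →
      ⌊(α 2 : ℚ) / 2⌋ = α 2 - α 1 ∧ ⌊(α 2 : ℚ) / 2⌋ ≤ α 1 ∧
      ∃ b₀ b₄ b₅ : ℤ, 0 ≤ b₀ ∧ 0 ≤ b₄ ∧ 0 ≤ b₅ ∧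
        α = ⌊(α 2 : ℚ) / 2⌋ • vE6 + ⌊(α 2 : ℚ) / 2⌋ • wE6
            + (α 1 - ⌊(α 2 : ℚ) / 2⌋) • uE6
            + b₀ • (-simpleRoot 0) + b₄ • (-simpleRoot 4) + b₅ • (-simpleRoot 5)) := by
  have hmem := hpos.mem_positiveRootsE6
  have h0 := apply_zero_le_apply_one_of_mem_positiveRootsE6 α hmem (hns 0)
  have h4 := apply_four_le_apply_three_of_mem_positiveRootsE6 α hmem (hns 4)
  have h5 := apply_five_le_apply_two_of_mem_positiveRootsE6 α hmem (hns 5)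
  refine ⟨apply_one_two_three_trichotomy_of_mem_positiveRootsE6 α hmem (hns 1) (hns 3) h01 h34,
    fun ⟨h12, _⟩ => ⟨h0, h4, h12 ▸ h5, eq_uE6_vE6_combination α h12⟩,
    fun ⟨_, h23⟩ => ⟨h0, h4, h23 ▸ h5, eq_uE6_wE6_combination α h23⟩,
    fun ⟨h13, h12⟩ => ?_⟩
  obtain ⟨hle, hge⟩ :=
    apply_two_bounds_of_mem_positiveRootsE6 α hmem (hns 2) h25 h13 h12
  have hfloor : ⌊(α 2 : ℚ) / 2⌋ = α 2 - α 1 := floor_intCast_div_two_eq (by omega) (by omega)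
  refine ⟨hfloor, by omega, α 1 - α 0, α 1 - α 4, α 2 - α 5, by omega, by omega, by omega,
    eq_vE6_wE6_uE6_combination α h13 hfloor⟩
end
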